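/- (Theorem 3.3) There exists β̄ > 0 such that for every β ≥ β̄ the following two inclusions hold: (i) every z ∈ S_β^opt all of whose blocks are extreme points of the corresponding Ω_i^+ belongs to S^opt; (ii) S^opt ⊆ S_β^opt. -/

import Mathlib

noncomputable section

/-- Dot product on `ℝ^m`. -/
def dotp {m : ℕ} (x y : Fin m → ℝ) : ℝ := ∑ k, x k * y k

/-- The ℓ₁ penalty term `p(z) = Σ_{i<j} ⟨x_i, x_j⟩`. -/
def pen {n m : ℕ} (z : Fin n → Fin m → ℝ) : ℝ :=
  ∑ i : Fin n, ∑ j : Fin n, if i < j then dotp (z i) (z j) else 0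

/-- `f` is multi-affine: affine in each block when the others are fixed. -/
def MultiAffine {n m : ℕ} (f : (Fin n → Fin m → ℝ) → ℝ) : Prop :=
  ∀ (i : Fin n) (z : Fin n → Fin m → ℝ) (x y : Fin m → ℝ) (t : ℝ),
    f (Function.update z i (t • x + (1 - t) • y)) =
      t * f (Function.update z i x) + (1 - t) * f (Function.update z i y)

/-- Membership in `Ω = Ω₁⁺ × ⋯ × Ωₙ⁺`. -/
def InOmega {n m : ℕ} (Om : Fin n → Set (Fin m → ℝ)) (z : Fin n → Fin m → ℝ) : Prop :=
  ∀ i, z i ∈ Om i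

/-- Feasibility for (P): `z ∈ Ω` and `⟨x_i, x_j⟩ = 0` for all `i ≠ j`. -/
def Feas {n m : ℕ} (Om : Fin n → Set (Fin m → ℝ)) (z : Fin n → Fin m → ℝ) : Prop :=
  InOmega Om z ∧ ∀ i j, i ≠ j → dotp (z i) (z j) = 0

/-- `S^opt`: global minimizers of `f` over the feasible region of (P). -/
def SOpt {n m : ℕ} (Om : Fin n → Set (Fin m → ℝ)) (f : (Fin n → Fin m → ℝ) → ℝ) :
    Set (Fin n → Fin m → ℝ) :=
  {z | Feas Om z ∧ ∀ w, Feas Om w → f z ≤ f w}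

/-- `S_β^opt`: global minimizers of `f_β = f + β p` over `Ω`. -/
def SBeta {n m : ℕ} (Om : Fin n → Set (Fin m → ℝ)) (f : (Fin n → Fin m → ℝ) → ℝ) (β : ℝ) :
    Set (Fin n → Fin m → ℝ) :=
  {z | InOmega Om z ∧ ∀ w, InOmega Om w → f z + β * pen z ≤ f w + β * pen w}

/-!
Let `z₀` be any feasible point. Since `f + β p` is multi-affine, it is concave in each block, so
by the minimum principle and Krein–Milman (`Ωᵢ⁺` is the convex hull of its finitely many extreme
points) its minimum over `Ω` is attained at a profile of extreme points. There are finitely many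
such profiles, and `p > 0` at each infeasible one, so for `β` large enough every infeasible
extreme profile `e` has `f e + β p e > f z₀`. Feasible points have `p = 0`, so above that
threshold every extreme minimizer of `f + β p` over `Ω` is feasible, and the minimum of `f + β p`
over `Ω` equals that of `f` over the feasible set.
-/

open Function Matrix

lemma dotp_eq_dotProduct {m : ℕ} (x y : Fin m → ℝ) : dotp x y = x ⬝ᵥ y := rfl

lemma convexHull_extremePoints_of_finite {E : Type*} [AddCommGroup E] [Module ℝ E]
    [TopologicalSpace E] [T2Space E] [IsTopologicalAddGroup E] [ContinuousSMul ℝ E]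
    [LocallyConvexSpace ℝ E] {s : Set E} (hs : IsCompact s) (hconv : Convex ℝ s)
    (hfin : (s.extremePoints ℝ).Finite) : convexHull ℝ (s.extremePoints ℝ) = s := by
  simpa [(hfin.isCompact_convexHull ℝ).isClosed.closure_eq] using
    closure_convexHull_extremePoints hs hconv

lemma Set.Finite.exists_forall_lt_add_mul {α : Type*} {s : Set α} (hs : s.Finite)
    (g p : α → ℝ) (c : ℝ) :
    ∃ βbar > 0, ∀ β ≥ βbar, ∀ e ∈ s, 0 < p e → c < g e + β * p e := by
  obtain ⟨C, hC⟩ := ((hs.inter_of_left {e | 0 < p e}).image fun e => (c - g e) / p e).bddAbove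
  refine ⟨max 1 (C + 1), by positivity, fun β hβ e he hpe => ?_⟩
  have hratio : (c - g e) / p e < β := by
    linarith [hC ⟨e, ⟨he, hpe⟩, rfl⟩, le_max_right 1 (C + 1)]
  linarith [(div_lt_iff₀ hpe).1 hratio]

section Penalty

variable {n m : ℕ} {z : Fin n → Fin m → ℝ}

lemma pen_term_nonneg (hz : ∀ i, 0 ≤ z i) (i j : Fin n) :
    0 ≤ if i < j then dotp (z i) (z j) else 0 := by
  split_ifs
  · exact dotProduct_nonneg_of_nonneg (hz i) (hz j)
  · exact le_rfl

lemma pen_nonneg (hz : ∀ i, 0 ≤ z i) : 0 ≤ pen z :=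
  Finset.sum_nonneg fun i _ => Finset.sum_nonneg fun j _ => pen_term_nonneg hz i j

lemma pen_eq_zero_iff (hz : ∀ i, 0 ≤ z i) :
    pen z = 0 ↔ ∀ i j, i ≠ j → dotp (z i) (z j) = 0 := by
  simp only [pen, Finset.sum_eq_zero_iff_of_nonneg fun i _ =>
      Finset.sum_nonneg fun j _ => pen_term_nonneg hz i j,
    Finset.sum_eq_zero_iff_of_nonneg fun j _ => pen_term_nonneg hz _ j, Finset.mem_univ,
    true_implies]
  constructor
  · intro h i j hij
    rcases hij.lt_or_gt with hlt | hgt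
    · simpa [hlt] using h i j
    · simpa [hgt, dotp_eq_dotProduct, dotProduct_comm] using h j i
  · intro h i j
    split_ifs with hlt
    · exact h i j hlt.ne
    · rfl

end Penalty

namespace MultiAffine

variable {n m : ℕ} {f g : (Fin n → Fin m → ℝ) → ℝ}

lemma add (hf : MultiAffine f) (hg : MultiAffine g) : MultiAffine fun z => f z + g z := by
  intro i z x y t
  simp only [hf i z x y t, hg i z x y t]
  ring

lemma const_mul (hf : MultiAffine f) (c : ℝ) : MultiAffine fun z => c * f z := by
  intro i z x y t
  simp only [hf i z x y t]
  ring

lemma concaveOn_update (hf : MultiAffine f) (z : Fin n → Fin m → ℝ) (i : Fin n) :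
    ConcaveOn ℝ Set.univ fun x => f (update z i x) := by
  refine ⟨convex_univ, fun x _ y _ a b _ _ hab => ?_⟩
  obtain rfl : b = 1 - a := by linarith
  exact (hf i z x y a).ge

lemma exists_le_of_mem_convexHull (hf : MultiAffine f) {E : Fin n → Set (Fin m → ℝ)}
    {w : Fin n → Fin m → ℝ} (hw : ∀ i, w i ∈ convexHull ℝ (E i)) :
    ∃ e, (∀ i, e i ∈ E i) ∧ f e ≤ f w := by
  suffices key : ∀ s : Finset (Fin n), ∀ w : Fin n → Fin m → ℝ,
      (∀ i, w i ∈ convexHull ℝ (E i)) → (∀ i ∉ s, w i ∈ E i) →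
      ∃ e, (∀ i, e i ∈ E i) ∧ f e ≤ f w from
    key Finset.univ w hw (by simp)
  intro s
  induction s using Finset.induction_on with
  | empty => exact fun w _ hE => ⟨w, fun i => hE i (Finset.notMem_empty i), le_rfl⟩
  | insert i s _ ih =>
    intro w hw hE
    obtain ⟨x, hxE, hxle⟩ :=
      (hf.concaveOn_update w i).exists_le_of_mem_convexHull (Set.subset_univ _) (hw i)
    rw [update_eq_self] at hxle
    obtain ⟨e, heE, hle⟩ := ih (update w i x)
      (forall_update_iff _ (p := fun j v => v ∈ convexHull ℝ (E j)) |>.2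
        ⟨subset_convexHull ℝ _ hxE, fun j _ => hw j⟩)
      (forall_update_iff _ (p := fun j v => j ∉ s → v ∈ E j) |>.2
        ⟨fun _ => hxE, fun j hji hjs => hE j (by simp [hji, hjs])⟩)
    exact ⟨e, heE, hle.trans hxle⟩

end MultiAffine

lemma multiAffine_pen {n m : ℕ} : MultiAffine (pen (n := n) (m := m)) := by
  intro i z x y t
  simp only [pen, Finset.mul_sum, ← Finset.sum_add_distrib]
  refine Finset.sum_congr rfl fun a _ => Finset.sum_congr rfl fun b _ => ?_
  split_ifs with hab
  · simp only [dotp_eq_dotProduct, update_apply]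
    split_ifs with ha hb hb
    · exact absurd (ha.trans hb.symm) hab.ne
    · simp only [add_dotProduct, smul_dotProduct, smul_eq_mul]
    · simp only [dotProduct_add, dotProduct_smul, smul_eq_mul]
    · ring
  · ring

section Exactness

variable {n m : ℕ} {Om : Fin n → Set (Fin m → ℝ)} {f : (Fin n → Fin m → ℝ) → ℝ}
  {z z₀ : Fin n → Fin m → ℝ} {β : ℝ}

lemma InOmega.nonneg (hnonneg : ∀ i, ∀ x ∈ Om i, ∀ k, 0 ≤ x k) (hz : InOmega Om z) :
    ∀ i, 0 ≤ z i :=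
  fun i k => hnonneg i _ (hz i) k

lemma feas_iff_pen_eq_zero (hnonneg : ∀ i, ∀ x ∈ Om i, ∀ k, 0 ≤ x k) (hz : InOmega Om z) :
    Feas Om z ↔ pen z = 0 := by
  rw [pen_eq_zero_iff (hz.nonneg hnonneg)]
  exact and_iff_right hz

lemma mem_SOpt_of_mem_SBeta (hnonneg : ∀ i, ∀ x ∈ Om i, ∀ k, 0 ≤ x k) (hz₀ : Feas Om z₀)
    (hz : z ∈ SBeta Om f β) (hbig : 0 < pen z → f z₀ < f z + β * pen z) : z ∈ SOpt Om f := by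
  obtain ⟨hzΩ, hzmin⟩ := hz
  have hpen : pen z = 0 := by
    refine (pen_nonneg (hzΩ.nonneg hnonneg)).eq_or_lt.elim Eq.symm fun hpos => ?_
    have hle := hzmin z₀ hz₀.1
    rw [(feas_iff_pen_eq_zero hnonneg hz₀.1).1 hz₀] at hle
    linarith [hbig hpos]
  refine ⟨(feas_iff_pen_eq_zero hnonneg hzΩ).2 hpen, fun w hw => ?_⟩
  have hle := hzmin w hw.1
  rw [hpen, (feas_iff_pen_eq_zero hnonneg hw.1).1 hw] at hle
  linarith

lemma SOpt_subset_SBeta (hnonneg : ∀ i, ∀ x ∈ Om i, ∀ k, 0 ≤ x k)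
    (hhull : ∀ i, convexHull ℝ ((Om i).extremePoints ℝ) = Om i) (hf : MultiAffine f)
    (hz₀ : Feas Om z₀)
    (hbig : ∀ e, (∀ i, e i ∈ (Om i).extremePoints ℝ) → 0 < pen e → f z₀ < f e + β * pen e) :
    SOpt Om f ⊆ SBeta Om f β := by
  rintro z ⟨hzF, hzmin⟩
  refine ⟨hzF.1, fun w hw => ?_⟩
  obtain ⟨e, hext, hle⟩ := (hf.add (multiAffine_pen.const_mul β)).exists_le_of_mem_convexHull
    fun i => (hhull i).symm ▸ hw i
  have heΩ : InOmega Om e := fun i => extremePoints_subset (hext i)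
  have hfe : f z ≤ f e + β * pen e := by
    rcases (pen_nonneg (heΩ.nonneg hnonneg)).eq_or_lt with h0 | hpos
    · rw [← h0, mul_zero, add_zero]
      exact hzmin e ((feas_iff_pen_eq_zero hnonneg heΩ).2 h0.symm)
    · exact (hzmin z₀ hz₀).trans (hbig e hext hpos).le
  rw [(feas_iff_pen_eq_zero hnonneg hzF.1).1 hzF]
  linarith

end Exactness

theorem partial_exact_penalty_general (n m : ℕ)
    (Om : Fin n → Set (Fin m → ℝ))
    (hcpt : ∀ i, IsCompact (Om i))
    (hcvx : ∀ i, Convex ℝ (Om i))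
    (hnonneg : ∀ i, ∀ x ∈ Om i, ∀ k, 0 ≤ x k)
    (hfin : ∀ i, (Set.extremePoints ℝ (Om i)).Finite)
    (f : (Fin n → Fin m → ℝ) → ℝ) (hf : MultiAffine f)
    (hFne : ∃ z, Feas Om z) :
    ∃ βbar : ℝ, 0 < βbar ∧ ∀ β ≥ βbar,
      (∀ z ∈ SBeta Om f β, (∀ i, z i ∈ Set.extremePoints ℝ (Om i)) → z ∈ SOpt Om f) ∧
      SOpt Om f ⊆ SBeta Om f β := by
  obtain ⟨z₀, hz₀⟩ := hFne
  have hhull i := convexHull_extremePoints_of_finite (hcpt i) (hcvx i) (hfin i)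
  obtain ⟨βbar, hβbar, hbig⟩ := (Set.Finite.pi hfin).exists_forall_lt_add_mul f pen (f z₀)
  refine ⟨βbar, hβbar, fun β hβ => ⟨fun z hz hext => ?_, ?_⟩⟩
  · exact mem_SOpt_of_mem_SBeta hnonneg hz₀ hz (hbig β hβ z (Set.mem_univ_pi.2 hext))
  · exact SOpt_subset_SBeta hnonneg hhull hf hz₀ fun e hext =>
      hbig β hβ e (Set.mem_univ_pi.2 hext)

/-- **Theorem 3.3** (partial exactness). There exists `β̄ > 0` such that for all
`β ≥ β̄`: (i) every extreme-point optimal solution of (P_β) is optimal for (P);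
(ii) `S^opt ⊆ S_β^opt`. -/
theorem partial_exact_penalty (n m : ℕ) (hn : 2 ≤ n) (hm : 1 ≤ m)
    (Om : Fin n → Set (Fin m → ℝ))
    (hne : ∀ i, (Om i).Nonempty) (hcpt : ∀ i, IsCompact (Om i))
    (hcvx : ∀ i, Convex ℝ (Om i))
    (hnonneg : ∀ i, ∀ x ∈ Om i, ∀ k, 0 ≤ x k)
    (hfin : ∀ i, (Set.extremePoints ℝ (Om i)).Finite)
    (f : (Fin n → Fin m → ℝ) → ℝ) (hf : MultiAffine f) (hfc : Continuous f)
    (hFne : ∃ z, Feas Om z) :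
    ∃ βbar : ℝ, 0 < βbar ∧ ∀ β ≥ βbar,
      (∀ z ∈ SBeta Om f β, (∀ i, z i ∈ Set.extremePoints ℝ (Om i)) → z ∈ SOpt Om f) ∧
      SOpt Om f ⊆ SBeta Om f β :=
  partial_exact_penalty_general n m Om hcpt hcvx hnonneg hfin f hf hFne
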